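/- Let X be a geometrically normal, geometrically integral, positive-dimensional projective variety over a field k. Then the underlying topological space |X| is uncountable if and only if the field k is uncountable. -/

import Mathlib

open AlgebraicGeometry CategoryTheory TopologicalSpace Limits

noncomputable section

universe u

set_option maxHeartbeats 1000000

attribute [instance] MvPolynomial.gradedAlgebra

/-- Projective `n`-space over `k`: `ℙⁿ_k = Proj k[x₀,…,xₙ]`, the `Proj` of the polynomial ring
in `n+1` variables with its standard grading by total degree. -/
def ProjectiveSpace (k : Type u) [CommRing k] (n : ℕ) : Scheme.{u} :=
  Proj (MvPolynomial.homogeneousSubmodule (Fin (n + 1)) k)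

/-- The structure morphism `ℙⁿ_k ⟶ Spec k`. -/
def ProjectiveSpace.structMap (k : Type u) [CommRing k] (n : ℕ) :
    ProjectiveSpace k n ⟶ Spec (CommRingCat.of k) :=
  Proj.toSpecZero _ ≫
    Spec.map (CommRingCat.ofHom
      (algebraMap k (MvPolynomial.homogeneousSubmodule (Fin (n + 1)) k 0)))

/-- `X`, with structure morphism `f : X ⟶ Spec k`, is a variety over the field `k`:
a separated scheme of finite type over `k`. -/
def IsVarietyOver (k : Type u) [Field k] {X : Scheme.{u}}
    (f : X ⟶ Spec (CommRingCat.of k)) : Prop :=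
  IsSeparated f ∧ LocallyOfFiniteType f ∧ QuasiCompact f

/-- `X` is projective over `k`: it admits a closed immersion over `k` into some `ℙⁿ_k`. -/
def IsProjectiveOver (k : Type u) [Field k] {X : Scheme.{u}}
    (f : X ⟶ Spec (CommRingCat.of k)) : Prop :=
  ∃ (n : ℕ) (ι : X ⟶ ProjectiveSpace k n),
    IsClosedImmersion ι ∧ ι ≫ ProjectiveSpace.structMap k n = f

/-- A scheme is normal if every stalk of its structure sheaf is an integrally closed domain. -/
def IsNormalScheme (X : Scheme.{u}) : Prop :=
  ∀ x : X, IsDomain (X.presheaf.stalk x) ∧ IsIntegrallyClosed (X.presheaf.stalk x)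

/-- The base change of `X` to an algebraic closure of `k`. -/
def geomBaseChange (k : Type u) [Field k] {X : Scheme.{u}}
    (f : X ⟶ Spec (CommRingCat.of k)) : Scheme.{u} :=
  pullback f (Spec.map (CommRingCat.ofHom (algebraMap k (AlgebraicClosure k))))

/-- `X` is geometrically integral over `k`: its base change to an algebraic closure of `k`
is an integral scheme. -/
def IsGeometricallyIntegralOver (k : Type u) [Field k] {X : Scheme.{u}}
    (f : X ⟶ Spec (CommRingCat.of k)) : Prop :=
  IsIntegral (geomBaseChange k f)

/-- `X` is geometrically normal over `k`: its base change to an algebraic closure of `k`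
is a normal scheme. -/
def IsGeometricallyNormalOver (k : Type u) [Field k] {X : Scheme.{u}}
    (f : X ⟶ Spec (CommRingCat.of k)) : Prop :=
  IsNormalScheme (geomBaseChange k f)

/-! If `k` is countable, every affine open of `X` is the spectrum of a countable noetherian ring,
which has countably many primes since every ideal is finitely generated, and finitely many affine
opens cover `X`.

If `k` is uncountable, positive dimension yields primes `p < q` of the ring `A` of an affine open.
The domain `A ⧸ p` is of finite type over `k` but not a field, so it contains an element `t`
transcendental over `k`. The inverses `(t - a)⁻¹` that exist are linearly independent over `k`,
while `A ⧸ p` has countable `k`-dimension, so `t - a` is a non-unit for uncountably many `a : k`;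
maximal ideals containing these pairwise comaximal elements are pairwise distinct. -/

open Cardinal

section Algebra

variable {k R : Type*} [CommRing k] [CommRing R] [Algebra k R]

theorem Algebra.FiniteType.countable [Countable k] [Algebra.FiniteType k R] : Countable R := by
  obtain ⟨n, g, hg⟩ := Algebra.FiniteType.iff_quotient_mvPolynomial''.mp ‹_›
  have : Countable (MvPolynomial (Fin n) k) := AddMonoidAlgebra.coeff_injective.countable
  exact hg.countable

theorem PrimeSpectrum.countable_of_isNoetherianRing [Countable R] [IsNoetherianRing R] :
    Countable (PrimeSpectrum R) := by
  have (p : PrimeSpectrum R) : ∃ s : Finset R, Ideal.span (s : Set R) = p.asIdeal :=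
    (isNoetherianRing_iff.mp ‹_›).noetherian p.asIdeal
  choose gens hgens using this
  refine Function.Injective.countable (f := gens) fun p q hpq => ?_
  exact PrimeSpectrum.ext (by rw [← hgens p, ← hgens q, hpq])

theorem PrimeSpectrum.countable_of_finiteType [Countable k] [IsNoetherianRing k]
    [Algebra.FiniteType k R] : Countable (PrimeSpectrum R) :=
  have := Algebra.FiniteType.countable (k := k) (R := R)
  have := Algebra.FiniteType.isNoetherianRing k R
  PrimeSpectrum.countable_of_isNoetherianRing

end Algebra

section Field

variable {k B : Type*} [Field k] [CommRing B] [Algebra k B]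

theorem Algebra.FiniteType.rank_le_aleph0 [Algebra.FiniteType k B] : Module.rank k B ≤ ℵ₀ := by
  obtain ⟨n, g, hg⟩ := Algebra.FiniteType.iff_quotient_mvPolynomial''.mp ‹_›
  have := LinearMap.lift_rank_le_of_surjective g.toLinearMap hg
  rw [MvPolynomial.rank_eq_lift] at this
  simpa using this.trans (lift_le.mpr mk_le_aleph0)

theorem Transcendental.countable_setOf_isUnit_sub [IsDomain B] {t : B}
    (ht : Transcendental k t) (hrank : Module.rank k B ≤ ℵ₀) :
    {a : k | IsUnit (t - algebraMap k B a)}.Countable := by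
  let K := FractionRing B
  have htK : Transcendental k (algebraMap B K t) :=
    (transcendental_algebraMap_iff (IsFractionRing.injective B K)).mpr ht
  let S := {a : k | IsUnit (t - algebraMap k B a)}
  let inv : S → B := fun a => ↑a.2.unit⁻¹
  have hinv : LinearIndependent k inv := by
    apply LinearIndependent.of_comp (IsScalarTower.toAlgHom k B K).toLinearMap
    have hcomp : (IsScalarTower.toAlgHom k B K).toLinearMap ∘ inv =
        (fun a : k => (algebraMap B K t - algebraMap k K a)⁻¹) ∘ Subtype.val := by
      funext a
      simp [inv, map_units_inv, IsScalarTower.algebraMap_apply k B K]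
    rw [hcomp]
    exact htK.linearIndependent_sub_inv.comp _ Subtype.val_injective
  have := hinv.cardinal_lift_le_rank.trans (lift_le.mpr hrank)
  rw [lift_aleph0, lift_le_aleph0] at this
  exact Set.countable_coe_iff.mp (mk_le_aleph0_iff.mp this)

theorem exists_transcendental_of_not_isField [IsDomain B] (h : ¬IsField B) :
    ∃ t : B, Transcendental k t := by
  by_contra! hall
  have : Algebra.IsIntegral k B := ⟨fun t => (not_not.mp (hall t)).isIntegral⟩
  exact h (isField_of_isIntegral_of_isField' (Field.toIsField k))

theorem PrimeSpectrum.uncountable_of_transcendental [Uncountable k] [IsDomain B] {t : B}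
    (ht : Transcendental k t) (hrank : Module.rank k B ≤ ℵ₀) : Uncountable (PrimeSpectrum B) := by
  let N := {a : k | ¬IsUnit (t - algebraMap k B a)}
  have : Uncountable N := by
    rw [← not_countable_iff, Set.countable_coe_iff]
    intro hN
    exact not_countable <| Set.countable_univ_iff.mp <|
      ((ht.countable_setOf_isUnit_sub hrank).union hN).mono fun a _ => em _
  have (a : N) : ∃ P : PrimeSpectrum B, t - algebraMap k B a ∈ P.asIdeal := by
    obtain ⟨M, hM, hle⟩ := Ideal.exists_le_maximal _ (Ideal.span_singleton_ne_top a.2)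
    exact ⟨⟨M, hM.isPrime⟩, hle (Ideal.mem_span_singleton_self _)⟩
  choose P hP using this
  refine Function.Injective.uncountable (f := P) fun a b hab => Subtype.ext ?_
  by_contra hne
  have hmem : algebraMap k B (b.1 - a.1) ∈ (P a).asIdeal := by
    rw [map_sub, ← sub_sub_sub_cancel_left _ _ t]
    exact (P a).asIdeal.sub_mem (hP a) (hab ▸ hP b)
  exact (P a).isPrime.ne_top <| Ideal.eq_top_of_isUnit_mem _ hmem
    ((sub_ne_zero.mpr (Ne.symm hne)).isUnit.map _)

theorem PrimeSpectrum.uncountable_of_not_isField [Uncountable k] [IsDomain B]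
    [Algebra.FiniteType k B] (h : ¬IsField B) : Uncountable (PrimeSpectrum B) :=
  have ⟨_, ht⟩ := exists_transcendental_of_not_isField (k := k) h
  uncountable_of_transcendental ht Algebra.FiniteType.rank_le_aleph0

theorem PrimeSpectrum.uncountable_of_lt [Uncountable k] [Algebra.FiniteType k B]
    {p q : PrimeSpectrum B} (hpq : p < q) : Uncountable (PrimeSpectrum B) := by
  have hfield : ¬IsField (B ⧸ p.asIdeal) := fun h => hpq.ne <| PrimeSpectrum.ext <|
    (Ideal.Quotient.maximal_of_isField p.asIdeal h).eq_of_le q.isPrime.ne_top hpq.le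
  have := PrimeSpectrum.uncountable_of_not_isField (k := k) hfield
  exact (PrimeSpectrum.comap_injective_of_surjective (Ideal.Quotient.mk p.asIdeal)
    Ideal.Quotient.mk_surjective).uncountable

end Field

section Topology

attribute [local instance] specializationOrder

theorem exists_specializes_ne_of_one_le_topologicalKrullDim {α : Type*} [TopologicalSpace α]
    [QuasiSober α] [T0Space α] (h : 1 ≤ topologicalKrullDim α) :
    ∃ x y : α, x ⤳ y ∧ x ≠ y := by
  obtain ⟨s, t, hst⟩ := Order.one_le_krullDim_iff.mp h
  have hlt := irreducibleSetEquivPoints.lt_iff_lt.mpr hst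
  exact ⟨_, _, hlt.le, hlt.ne'⟩

end Topology

namespace AlgebraicGeometry

variable {k : Type u} {X : Scheme.{u}}

theorem IsAffineOpen.exists_finiteType_of_locallyOfFiniteType [CommRing k]
    (f : X ⟶ Spec (CommRingCat.of k)) [LocallyOfFiniteType f] {U : X.Opens}
    (hU : IsAffineOpen U) : ∃ φ : k →+* Γ(X, U), φ.FiniteType := by
  have e : U ≤ f ⁻¹ᵁ ⊤ := le_top.trans (TopologicalSpace.Opens.map_top f.base).ge
  have hQ : (f.appLE ⊤ U e).hom.FiniteType :=
    HasRingHomProperty.appLE @LocallyOfFiniteType f ‹_› ⟨⊤, isAffineOpen_top _⟩ ⟨U, hU⟩ e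
  let eqv := (Scheme.ΓSpecIso (CommRingCat.of k)).commRingCatIsoToRingEquiv
  exact ⟨(f.appLE ⊤ U e).hom.comp eqv.symm.toRingHom,
    hQ.comp (RingHom.FiniteType.of_surjective _ eqv.symm.surjective)⟩

theorem IsAffineOpen.countable_of_locallyOfFiniteType [CommRing k] [Countable k]
    [IsNoetherianRing k] (f : X ⟶ Spec (CommRingCat.of k)) [LocallyOfFiniteType f]
    {U : X.Opens} (hU : IsAffineOpen U) : (U : Set X).Countable := by
  obtain ⟨φ, hφ⟩ := hU.exists_finiteType_of_locallyOfFiniteType f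
  let := φ.toAlgebra
  have : Algebra.FiniteType k Γ(X, U) := hφ
  have : Countable (Spec Γ(X, U)) := PrimeSpectrum.countable_of_finiteType (k := k)
  rw [← hU.range_fromSpec]
  exact Set.countable_range _

theorem Scheme.countable_of_locallyOfFiniteType [CommRing k] [Countable k] [IsNoetherianRing k]
    (f : X ⟶ Spec (CommRingCat.of k)) [LocallyOfFiniteType f] [QuasiCompact f] :
    Countable X := by
  have := QuasiCompact.compactSpace_of_compactSpace f
  obtain ⟨s, hs, huniv⟩ := (isCompact_and_isOpen_iff_finite_and_eq_biUnion_affineOpens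
    (U := (Set.univ : Set X))).mp ⟨isCompact_univ, isOpen_univ⟩
  rw [← Set.countable_univ_iff, huniv]
  exact hs.countable.biUnion fun U _ => U.2.countable_of_locallyOfFiniteType f

theorem Scheme.uncountable_of_specializes_of_ne [Field k] [Uncountable k]
    (f : X ⟶ Spec (CommRingCat.of k)) [LocallyOfFiniteType f] {x y : X} (hxy : x ⤳ y)
    (hne : x ≠ y) : Uncountable X := by
  obtain ⟨_, ⟨U, hU, rfl⟩, hyU, -⟩ :=
    X.isBasis_affineOpens.exists_subset_of_mem_open (Set.mem_univ y) isOpen_univ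
  have hxU : x ∈ (U : Set X) := hxy.mem_open U.isOpen hyU
  rw [← hU.range_fromSpec] at hxU hyU
  have := hU.isOpenImmersion_fromSpec
  obtain ⟨p : PrimeSpectrum Γ(X, U), rfl⟩ := hxU
  obtain ⟨q : PrimeSpectrum Γ(X, U), rfl⟩ := hyU
  have hpq : p < q :=
    lt_of_le_of_ne ((PrimeSpectrum.le_iff_specializes p q).mpr
      (hU.fromSpec.isOpenEmbedding.isInducing.specializes_iff.mp hxy)) (ne_of_apply_ne _ hne)
  obtain ⟨φ, hφ⟩ := hU.exists_finiteType_of_locallyOfFiniteType f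
  let := φ.toAlgebra
  have : Algebra.FiniteType k Γ(X, U) := hφ
  have : Uncountable (Spec Γ(X, U)) := PrimeSpectrum.uncountable_of_lt (k := k) hpq
  exact hU.fromSpec.isOpenEmbedding.injective.uncountable

end AlgebraicGeometry

theorem carrier_uncountable_iff_field_uncountable_general
    (k : Type u) [Field k] (X : Scheme.{u}) (f : X ⟶ Spec (CommRingCat.of k))
    (hvar : IsVarietyOver k f)
    (hdim : 1 ≤ topologicalKrullDim X) :
    Uncountable X ↔ Uncountable k := by
  obtain ⟨-, _, _⟩ := hvar
  constructor
  · contrapose!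
    exact fun _ => Scheme.countable_of_locallyOfFiniteType f
  · intro hk
    obtain ⟨x, y, hxy, hne⟩ := exists_specializes_ne_of_one_le_topologicalKrullDim hdim
    exact Scheme.uncountable_of_specializes_of_ne f hxy hne

/-- For a geometrically normal, geometrically integral, positive-dimensional projective
variety `X` over a field `k`, the space `|X|` is uncountable iff `k` is uncountable. -/
theorem carrier_uncountable_iff_field_uncountable
    (k : Type u) [Field k] (X : Scheme.{u}) (f : X ⟶ Spec (CommRingCat.of k))
    (hvar : IsVarietyOver k f) (hproj : IsProjectiveOver k f)
    (hnorm : IsGeometricallyNormalOver k f) (hint : IsGeometricallyIntegralOver k f)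
    (hdim : 1 ≤ topologicalKrullDim X) :
    Uncountable X ↔ Uncountable k :=
  carrier_uncountable_iff_field_uncountable_general k X f hvar hdim
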